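/- arXiv:2207.13169 — 3 statements merged into one kernel-verified Lean document; each statement's English description precedes it below -/
import Mathlib

section
/- Let (X_n) be iid copies of X ~ S_p(μ, Σ, α), 0 < α < 2, with Σ_{kk} > 0 for some k, and let s₁, s₂ be distinct positive reals. Then the estimator α̂_s(k) = log(log|φ̂_n(s₁e_k)| / log|φ̂_n(s₂e_k)|) / log(s₁/s₂) converges almost surely to α. -/
/-!
For a fixed frequency `t`, the summands `exp (i tᵀX_j)` are iid and bounded, so by the strong law
of large numbers `φ̂_n(t) → φ(t)` almost surely. Along `t = s e_k` the modulus of the stable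
characteristic function is `exp (-σ s^α)` with `σ = (Σ_kk / 2)^(α/2) > 0`, so
`log |φ̂_n(s₁e_k)| / log |φ̂_n(s₂e_k)| → (s₁/s₂)^α`, whose logarithm divided by `log (s₁/s₂)` is `α`.
-/

open Matrix MeasureTheory ProbabilityTheory Filter Topology

section EmpiricalCharFun

variable {Ω ι : Type*} [Fintype ι]

noncomputable def empiricalCharFun (X : ℕ → Ω → ι → ℝ) (n : ℕ) (t : ι → ℝ) (ω : Ω) : ℂ :=
  (n : ℂ)⁻¹ * ∑ j ∈ Finset.range n, Complex.exp (Complex.I * ((t ⬝ᵥ X j ω : ℝ) : ℂ))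

theorem ae_tendsto_empiricalCharFun [MeasurableSpace Ω] (μ : Measure Ω) [IsFiniteMeasure μ]
    (X : ℕ → Ω → ι → ℝ) (hindep : Pairwise fun i j => IndepFun (X i) (X j) μ)
    (hident : ∀ n, IdentDistrib (X n) (X 0) μ μ) (t : ι → ℝ) :
    ∀ᵐ ω ∂μ, Tendsto (fun n => empiricalCharFun X n t ω) atTop
      (𝓝 (∫ ω, Complex.exp (Complex.I * ((t ⬝ᵥ X 0 ω : ℝ) : ℂ)) ∂μ)) := by
  set g : (ι → ℝ) → ℂ := fun v => Complex.exp (Complex.I * ((t ⬝ᵥ v : ℝ) : ℂ))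
  have hg : Measurable g := by fun_prop
  have hint : Integrable (g ∘ X 0) μ := by
    refine (integrable_const (1 : ℝ)).mono'
      (hg.comp_aemeasurable (hident 0).aemeasurable_fst).aestronglyMeasurable ?_
    filter_upwards with ω
    simp [g, Complex.norm_exp]
  have hlaw := strong_law_ae (fun j => g ∘ X j) hint
    (fun i j hij => (hindep hij).comp hg hg) (fun i => (hident i).comp hg)
  filter_upwards [hlaw] with ω hω
  refine hω.congr fun n => ?_
  simp [empiricalCharFun, g, Complex.real_smul]

end EmpiricalCharFun

lemma smul_single_dotProduct_mulVec_smul_single {ι R : Type*} [Fintype ι] [DecidableEq ι]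
    [CommSemiring R] (S : Matrix ι ι R) (k : ι) (s : R) :
    (s • Pi.single k 1 : ι → R) ⬝ᵥ S *ᵥ (s • Pi.single k 1) = s ^ 2 * S k k := by
  rw [mulVec_smul, dotProduct_smul, smul_dotProduct, mulVec_single_one, single_one_dotProduct,
    col_apply, smul_eq_mul, smul_eq_mul]
  ring

lemma norm_cexp_I_mul_sub (a b : ℝ) :
    ‖Complex.exp (Complex.I * (a : ℂ) - (b : ℂ))‖ = Real.exp (-b) := by
  simp [Complex.norm_exp]

lemma half_mul_sq_mul_rpow {s : ℝ} (hs : 0 ≤ s) (c α : ℝ) (hc : 0 ≤ c) :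
    ((1 / 2 : ℝ) * (s ^ 2 * c)) ^ (α / 2) = (c / 2) ^ (α / 2) * s ^ α := by
  rw [show (1 / 2 : ℝ) * (s ^ 2 * c) = c / 2 * s ^ 2 by ring,
    Real.mul_rpow (by positivity) (by positivity), ← Real.rpow_natCast, ← Real.rpow_mul hs,
    Nat.cast_ofNat, mul_div_cancel₀ α two_ne_zero]

theorem Filter.Tendsto.log_div_log_of_tendsto_exp_neg {β : Type*} {l : Filter β}
    {u v : β → ℝ} {a b : ℝ} (hu : Tendsto u l (𝓝 (Real.exp (-a))))
    (hv : Tendsto v l (𝓝 (Real.exp (-b)))) (ha : a ≠ 0) (hb : b ≠ 0) :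
    Tendsto (fun x => Real.log (Real.log (u x) / Real.log (v x))) l (𝓝 (Real.log (a / b))) := by
  have hlu := hu.log (Real.exp_pos _).ne'
  have hlv := hv.log (Real.exp_pos _).ne'
  rw [Real.log_exp] at hlu hlv
  have hratio := hlu.div hlv (neg_ne_zero.mpr hb)
  rw [neg_div_neg_eq] at hratio
  exact hratio.log (div_ne_zero ha hb)

lemma log_div_mul_rpow_div_log {σ s₁ s₂ : ℝ} (hσ : 0 < σ) (hs₁ : 0 < s₁) (hs₂ : 0 < s₂)
    (hne : s₁ ≠ s₂) (α : ℝ) :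
    Real.log (σ * s₁ ^ α / (σ * s₂ ^ α)) / Real.log (s₁ / s₂) = α := by
  have hlog : Real.log (s₁ / s₂) ≠ 0 := by
    rw [Real.log_div hs₁.ne' hs₂.ne', sub_ne_zero]
    exact fun h => hne (Real.log_injOn_pos hs₁ hs₂ h)
  rw [mul_div_mul_left _ _ hσ.ne', ← Real.div_rpow hs₁.le hs₂.le,
    Real.log_rpow (div_pos hs₁ hs₂), mul_div_cancel_right₀ _ hlog]

theorem stmt_16_general {Ω : Type*} [MeasurableSpace Ω] (μ : Measure Ω) [IsProbabilityMeasure μ]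
    {p : ℕ} (μv : Fin p → ℝ) (S : Matrix (Fin p) (Fin p) ℝ)
    (α : ℝ)
    (k : Fin p) (hkk : 0 < S k k)
    (s₁ s₂ : ℝ) (hs₁ : 0 < s₁) (hs₂ : 0 < s₂) (hne : s₁ ≠ s₂)
    (X : ℕ → Ω → Fin p → ℝ)
    (hindep : iIndepFun X μ)
    (hident : ∀ n, IdentDistrib (X n) (X 0) μ μ)
    (hφ : ∀ t : Fin p → ℝ,
      (∫ ω, Complex.exp (Complex.I * ((t ⬝ᵥ X 0 ω : ℝ) : ℂ)) ∂μ)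
        = Complex.exp (Complex.I * ((t ⬝ᵥ μv : ℝ) : ℂ)
            - ((((1 / 2 : ℝ) * (t ⬝ᵥ S.mulVec t)) ^ (α / 2) : ℝ) : ℂ))) :
    ∀ᵐ ω ∂μ, Tendsto
      (fun n : ℕ =>
        Real.log
          (Real.log (‖(n : ℂ)⁻¹ * ∑ j ∈ Finset.range n,
              Complex.exp (Complex.I * (((s₁ • (Pi.single k 1 : Fin p → ℝ)) ⬝ᵥ X j ω : ℝ) : ℂ))‖)
            / Real.log (‖(n : ℂ)⁻¹ * ∑ j ∈ Finset.range n,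
              Complex.exp (Complex.I * (((s₂ • (Pi.single k 1 : Fin p → ℝ)) ⬝ᵥ X j ω : ℝ) : ℂ))‖))
          / Real.log (s₁ / s₂))
      atTop (nhds α) := by
  set σ := (S k k / 2) ^ (α / 2)
  have hσ : 0 < σ := Real.rpow_pos_of_pos (by positivity) _
  have hmodulus : ∀ s, 0 < s → ∀ᵐ ω ∂μ, Tendsto
      (fun n => ‖empiricalCharFun X n (s • Pi.single k 1) ω‖) atTop
      (𝓝 (Real.exp (-(σ * s ^ α)))) := by
    intro s hs
    filter_upwards [ae_tendsto_empiricalCharFun μ X (fun i j hij => hindep.indepFun hij) hident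
      (s • Pi.single k 1)] with ω hω
    rw [hφ, smul_single_dotProduct_mulVec_smul_single, half_mul_sq_mul_rpow hs.le _ _ hkk.le]
      at hω
    simpa only [norm_cexp_I_mul_sub] using hω.norm
  filter_upwards [hmodulus s₁ hs₁, hmodulus s₂ hs₂] with ω h₁ h₂
  rw [← log_div_mul_rpow_div_log hσ hs₁ hs₂ hne α]
  exact (h₁.log_div_log_of_tendsto_exp_neg h₂ (by positivity) (by positivity)).div_const _

theorem stmt_16 {Ω : Type*} [MeasurableSpace Ω] (μ : Measure Ω) [IsProbabilityMeasure μ]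
    {p : ℕ} (μv : Fin p → ℝ) (S : Matrix (Fin p) (Fin p) ℝ) (hS : S.PosSemidef)
    (α : ℝ) (hα : 0 < α) (hα2 : α < 2)
    (k : Fin p) (hkk : 0 < S k k)
    (s₁ s₂ : ℝ) (hs₁ : 0 < s₁) (hs₂ : 0 < s₂) (hne : s₁ ≠ s₂)
    (X : ℕ → Ω → Fin p → ℝ) (hX : ∀ n, Measurable (X n))
    (hindep : iIndepFun X μ)
    (hident : ∀ n, IdentDistrib (X n) (X 0) μ μ)
    (hφ : ∀ t : Fin p → ℝ,
      (∫ ω, Complex.exp (Complex.I * ((t ⬝ᵥ X 0 ω : ℝ) : ℂ)) ∂μ)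
        = Complex.exp (Complex.I * ((t ⬝ᵥ μv : ℝ) : ℂ)
            - ((((1 / 2 : ℝ) * (t ⬝ᵥ S.mulVec t)) ^ (α / 2) : ℝ) : ℂ))) :
    ∀ᵐ ω ∂μ, Tendsto
      (fun n : ℕ =>
        Real.log
          (Real.log (‖(n : ℂ)⁻¹ * ∑ j ∈ Finset.range n,
              Complex.exp (Complex.I * (((s₁ • (Pi.single k 1 : Fin p → ℝ)) ⬝ᵥ X j ω : ℝ) : ℂ))‖)
            / Real.log (‖(n : ℂ)⁻¹ * ∑ j ∈ Finset.range n,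
              Complex.exp (Complex.I * (((s₂ • (Pi.single k 1 : Fin p → ℝ)) ⬝ᵥ X j ω : ℝ) : ℂ))‖))
          / Real.log (s₁ / s₂))
      atTop (nhds α) :=
  stmt_16_general μ μv S α k hkk s₁ s₂ hs₁ hs₂ hne X hindep hident hφ
end

section
/- Let (X_n) be iid copies of X ~ S_p(μ, Σ, α), 0 < α < 2, with Σ_{ii} > 0, s > 0 fixed, and suppose α̂_n → α almost surely with α̂_n ∈ (0,2). Then (2/s²)·(−log|φ̂_n(s e_i)|)^{2/α̂_n} converges almost surely to Σ_{ii}. -/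
open Matrix MeasureTheory ProbabilityTheory Filter

/-!
Averaging the iid bounded variables `exp (i tᵀXⱼ)`, the strong law of large numbers makes the
empirical characteristic function converge a.s. to `φ(t)`. At `t = s eᵢ` the stable form gives
`|φ(t)| = exp (-(s² Σᵢᵢ / 2) ^ (α / 2))`, so `-log |φ̂ₙ(t)|` tends to `(s² Σᵢᵢ / 2) ^ (α / 2)`, and
raising it to the exponent `2 / α̂ₙ → 2 / α` (joint continuity of `rpow` for a positive exponent)
recovers `s² Σᵢᵢ / 2`.
-/

open Topology Finset

section StrongLaw

variable {Ω E F : Type*} [MeasurableSpace Ω] {μ : Measure Ω}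
  [MeasurableSpace E] [NormedAddCommGroup F] [NormedSpace ℝ F] [CompleteSpace F]
  [MeasurableSpace F] [BorelSpace F]

theorem ae_tendsto_average_comp_of_iIndepFun (X : ℕ → Ω → E) (hindep : iIndepFun X μ)
    (hident : ∀ n, IdentDistrib (X n) (X 0) μ μ) {f : E → F} (hf : Measurable f)
    (hint : Integrable (fun ω => f (X 0 ω)) μ) :
    ∀ᵐ ω ∂μ, Tendsto (fun n : ℕ => (n : ℝ)⁻¹ • ∑ j ∈ range n, f (X j ω)) atTop
      (𝓝 (∫ ω, f (X 0 ω) ∂μ)) :=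
  strong_law_ae (fun n ω => f (X n ω)) hint
    (fun _ _ hmn => (hindep.indepFun hmn).comp hf hf) (fun n => (hident n).comp hf)

end StrongLaw

theorem ae_tendsto_empirical_charFun {Ω : Type*} [MeasurableSpace Ω] {μ : Measure Ω}
    [IsFiniteMeasure μ] {p : ℕ} (X : ℕ → Ω → Fin p → ℝ) (hindep : iIndepFun X μ)
    (hident : ∀ n, IdentDistrib (X n) (X 0) μ μ) (t : Fin p → ℝ) :
    ∀ᵐ ω ∂μ, Tendsto
      (fun n : ℕ => (n : ℂ)⁻¹ * ∑ j ∈ range n, Complex.exp (Complex.I * ((t ⬝ᵥ X j ω : ℝ) : ℂ)))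
      atTop (𝓝 (∫ ω, Complex.exp (Complex.I * ((t ⬝ᵥ X 0 ω : ℝ) : ℂ)) ∂μ)) := by
  have hf : Measurable fun v : Fin p → ℝ => Complex.exp (Complex.I * ((t ⬝ᵥ v : ℝ) : ℂ)) := by
    fun_prop
  have hint : Integrable (fun ω => Complex.exp (Complex.I * ((t ⬝ᵥ X 0 ω : ℝ) : ℂ))) μ :=
    .of_bound (hf.comp_aemeasurable (hident 0).aemeasurable_fst).aestronglyMeasurable 1
      (.of_forall fun ω => by rw [mul_comm, Complex.norm_exp_ofReal_mul_I])
  filter_upwards [ae_tendsto_average_comp_of_iIndepFun X hindep hident hf hint] with ω hω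
  simpa only [Complex.real_smul, Complex.ofReal_inv, Complex.ofReal_natCast] using hω

theorem Complex.norm_exp_I_mul_ofReal_sub_ofReal (a b : ℝ) :
    ‖Complex.exp (Complex.I * a - b)‖ = Real.exp (-b) := by
  simp [Complex.norm_exp]

theorem Matrix.smul_single_one_dotProduct_mulVec {n R : Type*} [Fintype n] [DecidableEq n]
    [CommRing R] (S : Matrix n n R) (i : n) (s : R) :
    (s • Pi.single i 1 : n → R) ⬝ᵥ S *ᵥ (s • Pi.single i 1) = s ^ 2 * S i i := by
  simp only [mulVec_smul, mulVec_single, MulOpposite.op_one, one_smul, dotProduct_smul,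
    smul_dotProduct, single_dotProduct, col_apply, one_mul, smul_eq_mul]
  ring

theorem Real.tendsto_neg_log_of_tendsto_exp_neg {ι : Type*} {l : Filter ι} {u : ι → ℝ} {L : ℝ}
    (hu : Tendsto u l (𝓝 (Real.exp (-L)))) : Tendsto (fun n => -Real.log (u n)) l (𝓝 L) := by
  simpa using ((Real.continuousAt_log (Real.exp_ne_zero _)).tendsto.comp hu).neg

theorem two_div_sq_mul_half_sq_mul_rpow_rpow {σ s α : ℝ} (hσ : 0 ≤ σ) (hs : s ≠ 0) (hα : α ≠ 0) :
    2 / s ^ 2 * (((1 / 2 : ℝ) * (s ^ 2 * σ)) ^ (α / 2)) ^ (2 / α) = σ := by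
  rw [← inv_div α 2, Real.rpow_rpow_inv (by positivity) (by positivity)]
  field_simp

theorem stmt_17_general {Ω : Type*} [MeasurableSpace Ω] (μ : Measure Ω) [IsProbabilityMeasure μ]
    {p : ℕ} (μv : Fin p → ℝ) (S : Matrix (Fin p) (Fin p) ℝ)
    (α : ℝ) (hα : 0 < α)
    (i : Fin p) (hii : 0 < S i i) (s : ℝ) (hs : 0 < s)
    (X : ℕ → Ω → Fin p → ℝ)
    (hindep : iIndepFun X μ)
    (hident : ∀ n, IdentDistrib (X n) (X 0) μ μ)
    (hφ : ∀ t : Fin p → ℝ,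
      (∫ ω, Complex.exp (Complex.I * ((t ⬝ᵥ X 0 ω : ℝ) : ℂ)) ∂μ)
        = Complex.exp (Complex.I * ((t ⬝ᵥ μv : ℝ) : ℂ)
            - ((((1 / 2 : ℝ) * (t ⬝ᵥ S.mulVec t)) ^ (α / 2) : ℝ) : ℂ)))
    (αhat : ℕ → Ω → ℝ)
    (hαhat : ∀ᵐ ω ∂μ, Tendsto (fun n => αhat n ω) atTop (nhds α)) :
    ∀ᵐ ω ∂μ, Tendsto
      (fun n : ℕ => (2 / s ^ 2) *
        (-Real.log (‖(n : ℂ)⁻¹ * ∑ j ∈ Finset.range n,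
            Complex.exp (Complex.I * (((s • (Pi.single i 1 : Fin p → ℝ)) ⬝ᵥ X j ω : ℝ) : ℂ))‖))
          ^ (2 / αhat n ω))
      atTop (nhds (S i i)) := by
  set t : Fin p → ℝ := s • Pi.single i 1
  filter_upwards [ae_tendsto_empirical_charFun X hindep hident t, hαhat] with ω hφ_emp hαω
  rw [hφ t, smul_single_one_dotProduct_mulVec] at hφ_emp
  have hlog := Real.tendsto_neg_log_of_tendsto_exp_neg <| by
    simpa only [Complex.norm_exp_I_mul_ofReal_sub_ofReal] using hφ_emp.norm
  have hpow := hlog.rpow ((tendsto_const_nhds (x := (2 : ℝ))).div hαω hα.ne')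
    (.inr (by positivity))
  rw [← two_div_sq_mul_half_sq_mul_rpow_rpow hii.le hs.ne' hα.ne']
  exact hpow.const_mul (2 / s ^ 2)

theorem stmt_17 {Ω : Type*} [MeasurableSpace Ω] (μ : Measure Ω) [IsProbabilityMeasure μ]
    {p : ℕ} (μv : Fin p → ℝ) (S : Matrix (Fin p) (Fin p) ℝ) (hS : S.PosSemidef)
    (α : ℝ) (hα : 0 < α) (hα2 : α < 2)
    (i : Fin p) (hii : 0 < S i i) (s : ℝ) (hs : 0 < s)
    (X : ℕ → Ω → Fin p → ℝ) (hX : ∀ n, Measurable (X n))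
    (hindep : iIndepFun X μ)
    (hident : ∀ n, IdentDistrib (X n) (X 0) μ μ)
    (hφ : ∀ t : Fin p → ℝ,
      (∫ ω, Complex.exp (Complex.I * ((t ⬝ᵥ X 0 ω : ℝ) : ℂ)) ∂μ)
        = Complex.exp (Complex.I * ((t ⬝ᵥ μv : ℝ) : ℂ)
            - ((((1 / 2 : ℝ) * (t ⬝ᵥ S.mulVec t)) ^ (α / 2) : ℝ) : ℂ)))
    (αhat : ℕ → Ω → ℝ) (hrange : ∀ n ω, αhat n ω ∈ Set.Ioo (0 : ℝ) 2)
    (hαhat : ∀ᵐ ω ∂μ, Tendsto (fun n => αhat n ω) atTop (nhds α)) :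
    ∀ᵐ ω ∂μ, Tendsto
      (fun n : ℕ => (2 / s ^ 2) *
        (-Real.log (‖(n : ℂ)⁻¹ * ∑ j ∈ Finset.range n,
            Complex.exp (Complex.I * (((s • (Pi.single i 1 : Fin p → ℝ)) ⬝ᵥ X j ω : ℝ) : ℂ))‖))
          ^ (2 / αhat n ω))
      atTop (nhds (S i i)) :=
  stmt_17_general μ μv S α hα i hii s hs X hindep hident hφ αhat hαhat
end

section
/- Let φ be the characteristic function of a sub-Gaussian stable distribution with location μ, and suppose M > 0 satisfies |μ_k| < πM/2. Then M · arctan(Im(φ(e_k/M)) / Re(φ(e_k/M))) = μ_k. -/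
open Matrix Complex

theorem stmt_19 {p : ℕ} (μ : Fin p → ℝ) (S : Matrix (Fin p) (Fin p) ℝ)
    (hS : S.PosSemidef) (α : ℝ) (hα : 0 < α) (hα2 : α < 2)
    (k : Fin p) (M : ℝ) (hM : 0 < M) (hμk : |μ k| < Real.pi * M / 2)
    (φ : (Fin p → ℝ) → ℂ)
    (hφ : ∀ t, φ t = Complex.exp (Complex.I * ((t ⬝ᵥ μ : ℝ) : ℂ)
      - ((((1 / 2 : ℝ) * (t ⬝ᵥ S.mulVec t)) ^ (α / 2) : ℝ) : ℂ))) :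
    M * Real.arctan ((φ (M⁻¹ • (Pi.single k 1 : Fin p → ℝ))).im
        / (φ (M⁻¹ • (Pi.single k 1 : Fin p → ℝ))).re) = μ k := by
  set t : Fin p → ℝ := M⁻¹ • (Pi.single k 1 : Fin p → ℝ) with ht
  have hdot : t ⬝ᵥ μ = M⁻¹ * μ k := by
    simp [ht, dotProduct, Pi.single_apply, smul_eq_mul, Finset.mul_sum, ite_mul,
      Finset.sum_ite_eq', mul_comm]
  set a : ℝ := M⁻¹ * μ k with ha
  set r : ℝ := ((1 / 2 : ℝ) * (t ⬝ᵥ S.mulVec t)) ^ (α / 2) with hr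
  have hz : φ t = Complex.exp (Complex.I * (a : ℂ) - (r : ℂ)) := by
    rw [hφ, hdot]
  have hre : (Complex.I * (a : ℂ) - (r : ℂ)).re = -r := by simp
  have him : (Complex.I * (a : ℂ) - (r : ℂ)).im = a := by simp
  have hreφ : (φ t).re = Real.exp (-r) * Real.cos a := by
    rw [hz, Complex.exp_re, hre, him]
  have himφ : (φ t).im = Real.exp (-r) * Real.sin a := by
    rw [hz, Complex.exp_im, hre, him]
  have habs : |a| < Real.pi / 2 := by
    rw [ha, abs_mul, abs_of_pos (inv_pos.mpr hM)]
    rw [lt_div_iff₀ (by norm_num : (0:ℝ) < 2)]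
    calc M⁻¹ * |μ k| * 2 < M⁻¹ * (Real.pi * M / 2) * 2 := by
          have := mul_lt_mul_of_pos_left hμk (inv_pos.mpr hM)
          linarith
      _ = Real.pi := by field_simp
  have h1 : -(Real.pi / 2) < a := neg_lt_of_abs_lt habs
  have h2 : a < Real.pi / 2 := lt_of_abs_lt habs
  have hratio : (φ t).im / (φ t).re = Real.tan a := by
    rw [hreφ, himφ, mul_div_mul_left _ _ (Real.exp_ne_zero _), Real.tan_eq_sin_div_cos]
  rw [hratio, Real.arctan_tan h1 h2, ha]
  field_simp
end
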